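/- arXiv:2205.08972 — 3 statements merged into one kernel-verified Lean document; each statement's English description precedes it below -/
import Mathlib

section
/- Let σ : ZMod n → Bool and σ' = maj_r(σ). Suppose for a cell i the 2r-cell interval [i−r+1, i+r] is balanced in σ (equal numbers of 0s and 1s) and σ(i−r) ≠ σ(i+1+r). Then (i, i+1) is a switch point in σ', with σ'(i) = σ(i−r) and σ'(i+1) = σ(i+1+r). -/
open Finset

/-- Number of `true` cells in the radius-`r` neighborhood `[i-r, i+r]` of cell `i`. -/
def majCount (n r : ℕ) (σ : ZMod n → Bool) (i : ZMod n) : ℕ :=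
  ((Finset.range (2 * r + 1)).filter (fun (t : ℕ) => σ (i - (r : ZMod n) + (t : ZMod n)) = true)).card

/-- The majority rule with radius `r`. -/
def maj (n r : ℕ) (σ : ZMod n → Bool) : ZMod n → Bool :=
  fun i => decide (r + 1 ≤ majCount n r σ i)

/-- Number of cells with state `β` in the cyclic interval starting at `a` of length `L`. -/
def cnt (n : ℕ) (σ : ZMod n → Bool) (a : ZMod n) (L : ℕ) (β : Bool) : ℕ :=
  ((Finset.range L).filter (fun (t : ℕ) => σ (a + (t : ZMod n)) = β)).card

/-- `[a, a+L-1]` is a maximal homogeneous block of `σ`. -/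
def IsBlock (n : ℕ) (σ : ZMod n → Bool) (a : ZMod n) (L : ℕ) : Prop :=
  0 < L ∧ L ≤ n ∧ (∀ t : ℕ, t < L → σ (a + (t : ZMod n)) = σ a) ∧
    σ (a - 1) ≠ σ a ∧ σ (a + (L : ZMod n)) ≠ σ a

/-- Cell `c` lies in the cyclic interval starting at `a` of length `L`. -/
def InBlock (n : ℕ) (c a : ZMod n) (L : ℕ) : Prop :=
  ∃ t : ℕ, t < L ∧ c = a + (t : ZMod n)

lemma cnt_succ_top (n : ℕ) (σ : ZMod n → Bool) (a : ZMod n) (L : ℕ) (β : Bool) :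
    cnt n σ a (L + 1) β = cnt n σ a L β + (if σ (a + (L : ZMod n)) = β then 1 else 0) := by
  unfold cnt
  rw [Finset.range_add_one, Finset.filter_insert]
  split <;> simp [Finset.card_insert_of_notMem]

lemma cnt_succ_bot (n : ℕ) (σ : ZMod n → Bool) (a : ZMod n) (L : ℕ) (β : Bool) :
    cnt n σ a (L + 1) β = (if σ a = β then 1 else 0) + cnt n σ (a + 1) L β := by
  induction L with
  | zero =>
    unfold cnt
    rw [show 0 + 1 = 1 from rfl, Finset.range_one, Finset.filter_singleton]
    split <;> simp_all
  | succ L ih =>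
    rw [cnt_succ_top, ih, cnt_succ_top]
    have : a + ((L : ZMod n) + 1) = a + 1 + (L : ZMod n) := by ring
    push_cast
    rw [this]
    ring

lemma cnt_total (n : ℕ) (σ : ZMod n → Bool) (a : ZMod n) (L : ℕ) :
    cnt n σ a L false + cnt n σ a L true = L := by
  unfold cnt
  have hc : (Finset.range L).filter (fun t : ℕ => σ (a + (t : ZMod n)) = true)
      = (Finset.range L).filter (fun t : ℕ => ¬ σ (a + (t : ZMod n)) = false) := by
    apply Finset.filter_congr
    intro x _
    simp
  rw [hc, Finset.card_filter_add_card_filter_not, Finset.card_range]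

lemma majCount_eq_cnt (n r : ℕ) (σ : ZMod n → Bool) (i : ZMod n) :
    majCount n r σ i = cnt n σ (i - (r : ZMod n)) (2 * r + 1) true := rfl

/-- Converse to the switch point argument: a balanced interval `[i-r+1, i+r]`
together with `σ(i-r) ≠ σ(i+1+r)` produces a switch point `(i, i+1)` in `σ' = maj_r σ`
with `σ'(i) = σ(i-r)` and `σ'(i+1) = σ(i+1+r)`. -/
theorem balance_induces_switch_point (n r : ℕ) (hr : 1 ≤ r) (hn : 2 * r + 2 < n)
    (σ σ' : ZMod n → Bool) (h : maj n r σ = σ') (i : ZMod n)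
    (hbal : cnt n σ (i - (r : ZMod n) + 1) (2 * r) false =
            cnt n σ (i - (r : ZMod n) + 1) (2 * r) true)
    (hne : σ (i - (r : ZMod n)) ≠ σ (i + 1 + (r : ZMod n))) :
    σ' i ≠ σ' (i + 1) ∧ σ' i = σ (i - (r : ZMod n)) ∧
      σ' (i + 1) = σ (i + 1 + (r : ZMod n)) := by
  subst h
  have hmid : cnt n σ (i - (r : ZMod n) + 1) (2 * r) true = r := by
    have := cnt_total n σ (i - (r : ZMod n) + 1) (2 * r)
    omega
  have h1 : majCount n r σ i
      = (if σ (i - (r : ZMod n)) = true then 1 else 0) + r := by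
    rw [majCount_eq_cnt, cnt_succ_bot, hmid]
  have h2 : majCount n r σ (i + 1) = r + (if σ (i + 1 + (r : ZMod n)) = true then 1 else 0) := by
    rw [majCount_eq_cnt]
    have e1 : i + 1 - (r : ZMod n) = i - (r : ZMod n) + 1 := by ring
    have e2 : i - (r : ZMod n) + 1 + ((2 * r : ℕ) : ZMod n) = i + 1 + (r : ZMod n) := by
      push_cast; ring
    rw [e1, cnt_succ_top, hmid, e2]
  have hi : maj n r σ i = σ (i - (r : ZMod n)) := by
    unfold maj
    rw [h1]
    cases σ (i - (r : ZMod n)) <;> simp <;> omega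
  have hi1 : maj n r σ (i + 1) = σ (i + 1 + (r : ZMod n)) := by
    unfold maj
    rw [h2]
    cases σ (i + 1 + (r : ZMod n)) <;> simp <;> omega
  rw [hi, hi1]
  exact ⟨hne, rfl, rfl⟩
end

section
/- If σ and σ' form a temporally periodic pair (maj_r(σ) = σ' and maj_r(σ') = σ), then σ and σ' have the same number of maximal homogeneous blocks; equivalently, they have the same number of switch points. -/
open Finset

/-!
When `maj_r σ` switches between `i` and `i + 1`, the sliding window has just taken in the cell
`i + r + 1`, so that cell already carries the new majority value. Send each switch `i` of `maj_r σ`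
to the first switch of `σ` at or after `i + r + 1`. This is injective: as long as `σ` stays
constant from `i + r + 1` on, every later switch of `maj_r σ` would have to lead to that same
constant value, so `maj_r σ` cannot switch again. Hence the majority rule never increases the number
of switch points, and in a periodic pair the two counts bound each other.
-/

def switches {n : ℕ} [NeZero n] (σ : ZMod n → Bool) : Finset (ZMod n) :=
  {i | σ i ≠ σ (i + 1)}

def Follows {n : ℕ} (τ g : ZMod n → Bool) : Prop :=
  ∀ i, τ i ≠ τ (i + 1) → g i = τ (i + 1)

section Switches

variable {n : ℕ} [NeZero n]

lemma apply_add_eq_of_forall_lt_notMem_switches {σ : ZMod n → Bool} {a : ZMod n} {k : ℕ}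
    (h : ∀ j < k, a + j ∉ switches σ) : ∀ j ≤ k, σ (a + j) = σ a := by
  intro j hj
  induction j with
  | zero => simp
  | succ j ih =>
    have hj' := h j (by omega)
    simp only [switches, mem_filter, mem_univ, true_and, not_not] at hj'
    rw [Nat.cast_succ, ← add_assoc, ← hj', ih (by omega)]

lemma card_switches_comp_add_right (σ : ZMod n → Bool) (c : ZMod n) :
    #(switches (fun i => σ (i + c))) = #(switches σ) := by
  refine Finset.card_nbij' (· + c) (· - c) ?_ ?_ ?_ ?_ <;> intro i <;>
    simp [switches, add_right_comm]

end Switches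

namespace Follows

variable {n : ℕ} {τ g : ZMod n → Bool}

lemma apply_add_add_one_eq (hf : Follows τ g) {t : ZMod n} {d : ℕ} (h0 : g t = τ (t + 1))
    (hg : ∀ j ≤ d, g (t + j) = g t) : ∀ j ≤ d, τ (t + j + 1) = g t := by
  intro j hj
  induction j with
  | zero => simpa using h0.symm
  | succ j ih =>
    have hprev := ih (by omega)
    rw [Nat.cast_succ, ← add_assoc]
    by_cases hs : τ (t + j + 1) = τ (t + j + 1 + 1)
    · rw [← hs, hprev]
    · rw [← hf _ hs, add_assoc, ← Nat.cast_succ, hg _ hj]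

lemma eq_of_add_eq (hf : Follows τ g) {t t' : ZMod n} {k k' : ℕ}
    (ht : τ t ≠ τ (t + 1)) (ht' : τ t' ≠ τ (t' + 1))
    (hg : ∀ j ≤ k, g (t + j) = g t) (hk : k' ≤ k) (heq : t + k = t' + k') : t = t' := by
  obtain ⟨d, rfl⟩ := Nat.exists_eq_add_of_le hk
  have ht'd : t' = t + d := by push_cast at heq; linear_combination heq.symm
  subst ht'd
  rcases d with _ | e
  · simp
  have hτ := hf.apply_add_add_one_eq (hf t ht) hg
  refine absurd ?_ ht'
  rw [hτ (e + 1) (by omega), Nat.cast_succ, ← add_assoc, hτ e (by omega)]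

lemma switches_nonempty [NeZero n] (hf : Follows τ g) (hτ : (switches τ).Nonempty) :
    (switches g).Nonempty := by
  obtain ⟨t, ht⟩ := hτ
  simp only [switches, mem_filter, mem_univ, true_and] at ht
  by_contra hg
  have hconst := apply_add_eq_of_forall_lt_notMem_switches (a := t) (k := n - 1)
    (fun j _ hj => hg ⟨_, hj⟩)
  have hwrap : t + ((n - 1 : ℕ) : ZMod n) + 1 = t := by
    rw [add_assoc, Nat.cast_sub NeZero.one_le]
    simp
  have := hf.apply_add_add_one_eq (hf t ht) hconst (n - 1) le_rfl
  rw [hwrap] at this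
  exact ht (this.trans (hf t ht))

lemma card_switches_le [NeZero n] (hf : Follows τ g) : #(switches τ) ≤ #(switches g) := by
  rcases (switches τ).eq_empty_or_nonempty with hτ | hτ
  · simp [hτ]
  obtain ⟨s, hs⟩ := hf.switches_nonempty hτ
  have hreach : ∀ a : ZMod n, ∃ k : ℕ, a + k ∈ switches g :=
    fun a => ⟨(s - a).val, by simpa using hs⟩
  refine card_le_card_of_injOn (fun t => t + Nat.find (hreach t))
    (fun t _ => Nat.find_spec (hreach t)) ?_
  intro t ht t' ht' heq
  simp only [switches, coe_filter, mem_univ, true_and, Set.mem_ofPred_eq] at ht ht'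
  have hconst (a : ZMod n) := apply_add_eq_of_forall_lt_notMem_switches
    (fun j hj => Nat.find_min (hreach a) hj)
  rcases le_total (Nat.find (hreach t')) (Nat.find (hreach t)) with hk | hk
  · exact hf.eq_of_add_eq ht ht' (hconst t) hk heq
  · exact (hf.eq_of_add_eq ht' ht (hconst t') hk heq.symm).symm

end Follows

lemma majCount_add_one (n r : ℕ) (σ : ZMod n → Bool) (i : ZMod n) :
    majCount n r σ (i + 1) + (if σ (i - r) = true then 1 else 0) =
      majCount n r σ i + (if σ (i + r + 1) = true then 1 else 0) := by
  simp only [majCount, card_filter]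
  have hshift : ∀ t : ℕ, i + 1 - r + t = i - r + (t + 1 : ℕ) := fun t => by push_cast; ring
  have hlast : i - r + (2 * r + 1 : ℕ) = i + r + 1 := by push_cast; ring
  simp only [hshift]
  rw [← hlast, ← sum_range_succ, sum_range_succ' _ (2 * r + 1), Nat.cast_zero, add_zero]

lemma follows_maj (n r : ℕ) (σ : ZMod n → Bool) :
    Follows (maj n r σ) (fun i => σ (i + r + 1)) := by
  intro i h
  have key := majCount_add_one n r σ i
  simp only [maj, ne_eq, decide_eq_decide] at h ⊢
  cases ha : σ (i - r) <;> cases hb : σ (i + r + 1) <;> simp [ha, hb] at key ⊢ <;> omega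

theorem periodic_pair_same_block_count_general (n r : ℕ) [NeZero n]
    (σ σ' : ZMod n → Bool) (h1 : maj n r σ = σ') (h2 : maj n r σ' = σ) :
    (Finset.univ.filter (fun i : ZMod n => σ i ≠ σ (i + 1))).card =
      (Finset.univ.filter (fun i : ZMod n => σ' i ≠ σ' (i + 1))).card := by
  have hle := (follows_maj n r σ).card_switches_le
  have hle' := (follows_maj n r σ').card_switches_le
  simp only [add_assoc, card_switches_comp_add_right, h1, h2] at hle hle'
  exact le_antisymm hle' hle

/-- The two configurations of a temporally periodic pair have the same number of
maximal homogeneous blocks (equivalently, the same number of switch points). -/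
theorem periodic_pair_same_block_count (n r : ℕ) [NeZero n] (hr : 1 ≤ r)
    (σ σ' : ZMod n → Bool) (h1 : maj n r σ = σ') (h2 : maj n r σ' = σ) :
    (Finset.univ.filter (fun i : ZMod n => σ i ≠ σ (i + 1))).card =
      (Finset.univ.filter (fun i : ZMod n => σ' i ≠ σ' (i + 1))).card :=
  periodic_pair_same_block_count_general n r σ σ' h1 h2
end

section
/- Let σ, σ' form a temporally periodic pair under maj_r (maj_r(σ) = σ', maj_r(σ') = σ), and let [a,b] and [c,d] be adjacent maximal homogeneous blocks of σ' with c = b+1. Let J_1 be the block of σ containing a+r and J_2 the block of σ containing c+r. Then J_1 and J_2 are adjacent blocks of σ, with J_2 immediately following J_1. -/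
open Finset

lemma majCount_step (n r : ℕ) (τ : ZMod n → Bool) (i : ZMod n) :
    majCount n r τ (i + 1) + (if τ (i - (r:ZMod n)) = true then 1 else 0)
      = majCount n r τ i + (if τ (i + 1 + (r:ZMod n)) = true then 1 else 0) := by
  have key : ∀ t : ℕ, i + 1 - (r:ZMod n) + (t:ZMod n) = i - (r:ZMod n) + ((t+1:ℕ):ZMod n) := by
    intro t; push_cast; ring
  have h0 : i - (r:ZMod n) + ((0:ℕ):ZMod n) = i - (r:ZMod n) := by push_cast; ring
  have h2r : i - (r:ZMod n) + ((2*r+1:ℕ):ZMod n) = i + 1 + (r:ZMod n) := by push_cast; ring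
  unfold majCount
  rw [Finset.card_filter, Finset.card_filter]
  simp only [key]
  have e1 := Finset.sum_range_succ' (fun t : ℕ => if τ (i - (r:ZMod n) + (t:ZMod n)) = true then 1 else 0) (2*r+1)
  have e2 := Finset.sum_range_succ (fun t : ℕ => if τ (i - (r:ZMod n) + (t:ZMod n)) = true then 1 else 0) (2*r+1)
  simp only [h0, h2r] at e1 e2
  omega

lemma boundary (n r : ℕ) (τ : ZMod n → Bool) (i : ZMod n)
    (h : maj n r τ i ≠ maj n r τ (i + 1)) :
    τ (i - (r:ZMod n)) = maj n r τ i ∧ τ (i + 1 + (r:ZMod n)) = maj n r τ (i + 1) := by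
  have key := majCount_step n r τ i
  by_cases h0 : r + 1 ≤ majCount n r τ i <;> by_cases h1' : r + 1 ≤ majCount n r τ (i+1) <;>
    simp [maj, h0, h1'] at h ⊢ <;>
    cases hx : τ (i - (r:ZMod n)) <;> cases hy : τ (i + 1 + (r:ZMod n)) <;>
      simp [hx, hy] at key ⊢ <;> omega

private lemma bool_trans {x y z : Bool} (h1 : x ≠ y) (h2 : z ≠ y) : x = z := by
  revert h1 h2; cases x <;> cases y <;> cases z <;> decide

/-- `pos n a r k` is the cell `a + r + k`. -/
private def pos (n : ℕ) (a : ZMod n) (r k : ℕ) : ZMod n := a + (r:ZMod n) + (k:ZMod n)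

/-- For a temporally periodic pair, adjacent blocks `[a,b]` and `[c,d]` (with `c = b+1`)
of `σ'` are mapped by the right mapping to adjacent blocks of `σ`:
the block of `σ` containing `c + r` immediately follows the block of `σ` containing
`a + r`. -/
theorem adjacent_blocks_map_to_adjacent_blocks (n r : ℕ) (hr : 1 ≤ r)
    (σ σ' : ZMod n → Bool) (h1 : maj n r σ = σ') (h2 : maj n r σ' = σ)
    (hσ : ∃ i : ZMod n, σ i ≠ σ (i + 1)) (hσ' : ∃ i : ZMod n, σ' i ≠ σ' (i + 1))
    (a : ZMod n) (L₁ L₂ : ℕ)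
    (hb1 : IsBlock n σ' a L₁) (hb2 : IsBlock n σ' (a + (L₁ : ZMod n)) L₂)
    (s₁ : ZMod n) (M₁ : ℕ) (hJ1 : IsBlock n σ s₁ M₁)
    (hJ1in : InBlock n (a + (r : ZMod n)) s₁ M₁)
    (s₂ : ZMod n) (M₂ : ℕ) (hJ2 : IsBlock n σ s₂ M₂)
    (hJ2in : InBlock n (a + (L₁ : ZMod n) + (r : ZMod n)) s₂ M₂) :
    s₂ = s₁ + (M₁ : ZMod n) := by
  classical
  obtain ⟨hL₁pos, hL₁n, hconst1, hleft1, hright1⟩ := hb1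
  obtain ⟨hL₂pos, hL₂n, hconst2, hleft2, hright2⟩ := hb2
  obtain ⟨hM₁pos, hM₁n, hconstJ1, hleftJ1, hrightJ1⟩ := hJ1
  obtain ⟨hM₂pos, hM₂n, hconstJ2, hleftJ2, hrightJ2⟩ := hJ2
  -- F1 : σ (a + r) = σ' a
  have e0 : a - 1 + 1 = a := by ring
  have hF1 : σ (a + (r:ZMod n)) = σ' a := by
    have hne : maj n r σ (a - 1) ≠ maj n r σ ((a - 1) + 1) := by
      rw [h1, e0]; exact hleft1
    have h := (boundary n r σ (a - 1) hne).2
    rw [h1, e0] at h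
    exact h
  -- F2 : σ (a + L₁ + r) = σ' (a + L₁)
  have e1 : a + (L₁:ZMod n) - 1 + 1 = a + (L₁:ZMod n) := by ring
  have hF2 : σ (a + (L₁:ZMod n) + (r:ZMod n)) = σ' (a + (L₁:ZMod n)) := by
    have hne : maj n r σ (a + (L₁:ZMod n) - 1) ≠ maj n r σ ((a + (L₁:ZMod n) - 1) + 1) := by
      rw [h1, e1]; exact hleft2
    have h := (boundary n r σ _ hne).2
    rw [h1, e1] at h
    exact h
  -- F3 : σ' (a + L₁) ≠ σ' a
  have hF3 : σ' (a + (L₁:ZMod n)) ≠ σ' a := by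
    have hc1 : σ' (a + (L₁:ZMod n) - 1) = σ' a := by
      have h := hconst1 (L₁ - 1) (by omega)
      rw [show a + ((L₁ - 1 : ℕ):ZMod n) = a + (L₁:ZMod n) - 1 by
        rw [Nat.cast_sub hL₁pos]; push_cast; ring] at h
      exact h
    intro h
    exact hleft2 (hc1.trans h.symm)
  -- F4 : boundaries of σ within the stretch have value σ' a on the left
  have hF4 : ∀ k : ℕ, k < L₁ → σ (pos n a r k) ≠ σ (pos n a r (k+1)) → σ (pos n a r k) = σ' a := by
    intro k hk hne
    have hstep : pos n a r k + 1 = pos n a r (k+1) := by simp only [pos]; push_cast; ring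
    have hb : maj n r σ' (pos n a r k) ≠ maj n r σ' (pos n a r k + 1) := by
      rw [h2, hstep]; exact hne
    have h := (boundary n r σ' _ hb).1
    rw [h2] at h
    have harg : pos n a r k - (r:ZMod n) = a + (k:ZMod n) := by simp only [pos]; ring
    rw [harg, hconst1 k hk] at h
    exact h.symm
  -- the first deviation point m
  have hcr : pos n a r L₁ = a + (L₁:ZMod n) + (r:ZMod n) := by simp only [pos]; ring
  have hex : ∃ k, k ≤ L₁ ∧ σ (pos n a r k) ≠ σ' a := ⟨L₁, le_rfl, by rw [hcr, hF2]; exact hF3⟩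
  set m := Nat.find hex with hm_def
  have hmspec := Nat.find_spec hex
  have hmL : m ≤ L₁ := hmspec.1
  have hmP : σ (pos n a r m) ≠ σ' a := hmspec.2
  have hmlow : ∀ k, k < m → σ (pos n a r k) = σ' a := by
    intro k hk
    have h := Nat.find_min hex (hm_def ▸ hk)
    push_neg at h
    exact h (by omega)
  have hm1 : 1 ≤ m := by
    by_contra h
    push_neg at h
    apply hmP
    rw [show m = 0 by omega]
    show σ (pos n a r 0) = σ' a
    simpa [pos] using hF1
  have hup : ∀ k, m ≤ k → k ≤ L₁ → σ (pos n a r k) ≠ σ' a := by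
    intro k hk
    induction k, hk using Nat.le_induction with
    | base => intro _; exact hmP
    | succ k hk ih =>
      intro hkL
      have ihk := ih (by omega)
      intro hcontra
      have hne : σ (pos n a r k) ≠ σ (pos n a r (k+1)) := by rw [hcontra]; exact ihk
      exact ihk (hF4 k (by omega) hne)
  -- block J₁ : its right end is pos m
  obtain ⟨t₁, ht₁, heq1⟩ := hJ1in
  have hs1val : σ s₁ = σ' a := by
    have h := hconstJ1 t₁ ht₁
    rw [← heq1] at h
    rw [← h]; exact hF1
  have hposw : ∀ w : ℕ, pos n a r w = s₁ + ((t₁ + w : ℕ) : ZMod n) := by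
    intro w
    simp only [pos]
    rw [heq1]
    push_cast; ring
  have hG1 : ∀ w, w < M₁ - t₁ → σ (pos n a r w) = σ' a := by
    intro w hw
    rw [hposw w, hconstJ1 (t₁ + w) (by omega), hs1val]
  have hnat1 : t₁ + (M₁ - t₁) = M₁ := by omega
  have hG2e : pos n a r (M₁ - t₁) = s₁ + (M₁ : ZMod n) := by
    rw [hposw, hnat1]
  have hG2 : σ (pos n a r (M₁ - t₁)) ≠ σ' a := by
    rw [hG2e, ← hs1val]; exact hrightJ1
  have huL : M₁ - t₁ ≤ L₁ := by
    by_contra hcon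
    exact hmP (hG1 m (by omega))
  have hum : M₁ - t₁ = m := by
    have hmu : m ≤ M₁ - t₁ := Nat.find_min' hex ⟨huL, hG2⟩
    by_contra hcon
    exact hmP (hG1 m (by omega))
  have hend1 : s₁ + (M₁:ZMod n) = pos n a r m := by rw [← hG2e, hum]
  -- block J₂ : its left end is pos m
  obtain ⟨t₂, ht₂, heq2⟩ := hJ2in
  have hs2val : σ s₂ ≠ σ' a := by
    have h := hconstJ2 t₂ ht₂
    rw [← heq2] at h
    rw [← h, hF2]; exact hF3
  by_cases hcase : t₂ ≤ L₁
  · have hbase : s₂ = pos n a r (L₁ - t₂) := by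
      have e1' : pos n a r (L₁ - t₂) + (t₂:ZMod n) = a + (L₁:ZMod n) + (r:ZMod n) := by
        simp only [pos]; rw [Nat.cast_sub hcase]; ring
      exact (add_right_cancel (e1'.trans heq2)).symm
    have hH1 : ∀ k, L₁ - t₂ ≤ k → k ≤ L₁ → σ (pos n a r k) ≠ σ' a := by
      intro k hk1 hk2
      obtain ⟨w, rfl⟩ := Nat.exists_eq_add_of_le hk1
      have hpw : pos n a r (L₁ - t₂ + w) = s₂ + (w:ZMod n) := by
        rw [hbase]; simp only [pos]; push_cast; ring
      rw [hpw, hconstJ2 w (by omega)]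
      exact hs2val
    have hmv : m ≤ L₁ - t₂ := Nat.find_min' hex ⟨by omega, hH1 _ le_rfl (by omega)⟩
    have hvm : L₁ - t₂ ≤ m := by
      by_contra hcon
      push_neg at hcon
      have hv1 : 1 ≤ L₁ - t₂ := by omega
      have hsub : pos n a r (L₁ - t₂ - 1) + 1 = pos n a r (L₁ - t₂) := by
        simp only [pos]; rw [Nat.cast_sub hv1]; ring
      have hnb : σ (pos n a r (L₁ - t₂ - 1)) ≠ σ s₂ := by
        have e : s₂ - 1 = pos n a r (L₁ - t₂ - 1) := by rw [hbase, ← hsub]; ring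
        rw [← e]; exact hleftJ2
      have hval : σ (pos n a r (L₁ - t₂ - 1)) = σ' a := bool_trans hnb (Ne.symm hs2val)
      exact (hup (L₁ - t₂ - 1) (by omega) (by omega)) hval
    rw [hbase, hend1, show L₁ - t₂ = m from le_antisymm hvm hmv]
  · exfalso
    have e1' : s₂ + ((t₂ - L₁ : ℕ):ZMod n) + (L₁:ZMod n) = s₂ + (t₂:ZMod n) := by
      rw [Nat.cast_sub (by omega : L₁ ≤ t₂)]; ring
    have e2' : pos n a r 0 + (L₁:ZMod n) = a + (L₁:ZMod n) + (r:ZMod n) := by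
      simp only [pos]; push_cast; ring
    have e : pos n a r 0 = s₂ + ((t₂ - L₁ : ℕ):ZMod n) :=
      add_right_cancel (e2'.trans (heq2.trans e1'.symm))
    have hc : σ (pos n a r 0) = σ s₂ := by rw [e]; exact hconstJ2 _ (by omega)
    apply hs2val
    rw [← hc]
    simpa [pos] using hF1
end
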